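/- Let τ and d be real numbers with 0 < τ < d and let α = α(τ,d). Then K_2 = √(1 - τ²/d²); equivalently, C_2 = i·(τ/|α|²)·√(1 - τ²/d²). -/

import Mathlib

/-- The saddle point `α(τ,d) = -i (d/τ - √(d²/τ² - 1))`. -/
noncomputable def alph (τ d : ℝ) : ℂ :=
  -Complex.I * ((d / τ - Real.sqrt (d ^ 2 / τ ^ 2 - 1) : ℝ) : ℂ)

/-- `C_m = (-1)^{m+1} d/(1+α)^m + d/(1-α)^m + (-1)^{m+1} iτ/α^m`. -/
noncomputable def Cm (τ d : ℝ) (m : ℕ) : ℂ :=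
  (-1) ^ (m + 1) * (d : ℂ) / (1 + alph τ d) ^ m + (d : ℂ) / (1 - alph τ d) ^ m +
    (-1) ^ (m + 1) * Complex.I * (τ : ℂ) / alph τ d ^ m

/-- `K_m = 1 - (iτ/d)^{m-1} [(-1)^{m+1} ((1-α)/2)^m + ((1+α)/2)^m]`. -/
noncomputable def Kc (τ d : ℝ) (m : ℕ) : ℂ :=
  1 - (Complex.I * (τ : ℂ) / (d : ℂ)) ^ (m - 1) *
    ((-1) ^ (m + 1) * ((1 - alph τ d) / 2) ^ m + ((1 + alph τ d) / 2) ^ m)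

open Complex

/- `α = -i r`, where `r = d/τ - √(d²/τ² - 1)` is the smaller root of `r² - 2(d/τ) r + 1`; hence
`α` solves `τ (1 - α²) = 2 i d α`. Squaring this equation and using `|α|² = r² = -α²` turns
`C₂ = 4dα/(1 - α²)² - iτ/α²` into `(iτ/|α|²) K₂`, while
`K₂ = 1 - (iτ/d) α = 1 - τ r/d = (τ/d) √(d²/τ² - 1) = √(1 - τ²/d²)`. -/

namespace Real

theorem sub_sqrt_sq_sub_one_pos {x : ℝ} (hx : 1 ≤ x) : 0 < x - √(x ^ 2 - 1) := by
  have hlt : √(x ^ 2 - 1) < √(x ^ 2) := sqrt_lt_sqrt (by nlinarith) (by linarith)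
  rw [sqrt_sq (by linarith)] at hlt
  linarith

theorem sub_sqrt_sq_sub_one_quadratic {x : ℝ} (hx : 1 ≤ x ^ 2) :
    (x - √(x ^ 2 - 1)) ^ 2 - 2 * x * (x - √(x ^ 2 - 1)) + 1 = 0 := by
  linear_combination sq_sqrt (by linarith : 0 ≤ x ^ 2 - 1)

theorem sqrt_one_sub_sq_div_sq {τ d : ℝ} (hτ : 0 < τ) (hd : 0 < d) :
    √(1 - τ ^ 2 / d ^ 2) = τ / d * √(d ^ 2 / τ ^ 2 - 1) := by
  have hsplit : 1 - τ ^ 2 / d ^ 2 = (τ / d) ^ 2 * (d ^ 2 / τ ^ 2 - 1) := by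
    field_simp
  rw [hsplit, sqrt_mul (by positivity), sqrt_sq (by positivity)]

end Real

noncomputable def alphRadius (τ d : ℝ) : ℝ := d / τ - √(d ^ 2 / τ ^ 2 - 1)

theorem alph_eq_neg_I_mul (τ d : ℝ) : alph τ d = -I * alphRadius τ d := rfl

theorem alph_sq (τ d : ℝ) : alph τ d ^ 2 = -(alphRadius τ d : ℂ) ^ 2 := by
  rw [alph_eq_neg_I_mul]
  linear_combination (alphRadius τ d : ℂ) ^ 2 * I_sq

theorem one_add_alph_ne_zero (τ d : ℝ) : 1 + alph τ d ≠ 0 := by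
  intro h
  simpa [alph] using congrArg re h

theorem one_sub_alph_ne_zero (τ d : ℝ) : 1 - alph τ d ≠ 0 := by
  intro h
  simpa [alph] using congrArg re h

section Saddle

variable {τ d : ℝ}

theorem alphRadius_pos (hτ : 0 < τ) (hτd : τ < d) : 0 < alphRadius τ d := by
  simpa [alphRadius, div_pow] using Real.sub_sqrt_sq_sub_one_pos ((one_le_div hτ).2 hτd.le)

theorem alphRadius_quadratic (hτ : 0 < τ) (hτd : τ < d) :
    τ * (1 + alphRadius τ d ^ 2) = 2 * d * alphRadius τ d := by
  have hroot := Real.sub_sqrt_sq_sub_one_quadratic (one_le_pow₀ ((one_le_div hτ).2 hτd.le) :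
    1 ≤ (d / τ) ^ 2)
  rw [div_pow, ← alphRadius] at hroot
  have hcancel : τ * (d / τ) = d := mul_div_cancel₀ d hτ.ne'
  linear_combination τ * hroot + 2 * alphRadius τ d * hcancel

theorem alph_ne_zero (hτ : 0 < τ) (hτd : τ < d) : alph τ d ≠ 0 := by
  have := (alphRadius_pos hτ hτd).ne'
  simpa [alph_eq_neg_I_mul]

theorem norm_alph (hτ : 0 < τ) (hτd : τ < d) : ‖alph τ d‖ = alphRadius τ d := by
  rw [alph_eq_neg_I_mul, norm_mul, norm_neg, norm_I, one_mul, norm_real, Real.norm_of_nonneg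
    (alphRadius_pos hτ hτd).le]

theorem alph_saddle (hτ : 0 < τ) (hτd : τ < d) :
    (τ : ℂ) * (1 - alph τ d ^ 2) = 2 * I * d * alph τ d := by
  have hquad : (τ : ℂ) * (1 + (alphRadius τ d : ℂ) ^ 2) = 2 * d * alphRadius τ d := by
    exact_mod_cast alphRadius_quadratic hτ hτd
  rw [alph_sq, alph_eq_neg_I_mul]
  linear_combination hquad + 2 * d * (alphRadius τ d : ℂ) * I_sq

end Saddle

theorem Kc_two (τ d : ℝ) : Kc τ d 2 = 1 - I * τ / d * alph τ d := by
  simp only [Kc]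
  ring

theorem Cm_two (τ d : ℝ) :
    Cm τ d 2 = 4 * d * alph τ d / (1 - alph τ d ^ 2) ^ 2 - I * τ / alph τ d ^ 2 := by
  have hp := one_add_alph_ne_zero τ d
  have hm := one_sub_alph_ne_zero τ d
  have hsq : 1 - alph τ d ^ 2 = (1 - alph τ d) * (1 + alph τ d) := by ring
  have hpair : -(d : ℂ) / (1 + alph τ d) ^ 2 + d / (1 - alph τ d) ^ 2
      = 4 * d * alph τ d / (1 - alph τ d ^ 2) ^ 2 := by
    rw [hsq]
    field_simp
    ring
  rw [Cm]
  linear_combination hpair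

theorem Cm_two_eq_mul_Kc_two {τ d : ℝ} (hd : d ≠ 0) (hα : alph τ d ≠ 0)
    (hsaddle : (τ : ℂ) * (1 - alph τ d ^ 2) = 2 * I * d * alph τ d) :
    Cm τ d 2 = -I * τ / alph τ d ^ 2 * Kc τ d 2 := by
  have hsq : (τ : ℂ) ^ 2 * (1 - alph τ d ^ 2) ^ 2 = -4 * d ^ 2 * alph τ d ^ 2 := by
    linear_combination (τ * (1 - alph τ d ^ 2) + 2 * I * d * alph τ d) * hsaddle
      + 4 * d ^ 2 * alph τ d ^ 2 * I_sq
  have h1 : 1 - alph τ d ^ 2 ≠ 0 := by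
    rw [show 1 - alph τ d ^ 2 = (1 - alph τ d) * (1 + alph τ d) by ring]
    exact mul_ne_zero (one_sub_alph_ne_zero τ d) (one_add_alph_ne_zero τ d)
  have hdC : (d : ℂ) ≠ 0 := by exact_mod_cast hd
  have hsplit : 4 * d * alph τ d / (1 - alph τ d ^ 2) ^ 2 = -τ ^ 2 / (alph τ d * d) := by
    rw [div_eq_div_iff (pow_ne_zero 2 h1) (mul_ne_zero hα hdC)]
    linear_combination hsq
  rw [Cm_two, Kc_two, hsplit]
  field_simp
  linear_combination -τ ^ 2 * alph τ d * I_sq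

theorem Kc_two_eq_sqrt {τ d : ℝ} (hτ : 0 < τ) (hd : 0 < d) :
    Kc τ d 2 = ((√(1 - τ ^ 2 / d ^ 2) : ℝ) : ℂ) := by
  rw [Kc_two, alph_eq_neg_I_mul, Real.sqrt_one_sub_sq_div_sq hτ hd, alphRadius]
  have hτC : (τ : ℂ) ≠ 0 := by exact_mod_cast hτ.ne'
  have hdC : (d : ℂ) ≠ 0 := by exact_mod_cast hd.ne'
  generalize √(d ^ 2 / τ ^ 2 - 1) = s
  push_cast
  field_simp
  linear_combination (d - τ * s : ℂ) * I_sq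

theorem K_two_formula (τ d : ℝ) (h0 : 0 < τ) (hτd : τ < d) :
    Kc τ d 2 = ((Real.sqrt (1 - τ ^ 2 / d ^ 2) : ℝ) : ℂ) ∧
    Cm τ d 2 = Complex.I * ((τ / ‖alph τ d‖ ^ 2 : ℝ) : ℂ) *
      ((Real.sqrt (1 - τ ^ 2 / d ^ 2) : ℝ) : ℂ) := by
  have hd : 0 < d := h0.trans hτd
  have hK := Kc_two_eq_sqrt h0 hd
  refine ⟨hK, ?_⟩
  rw [Cm_two_eq_mul_Kc_two hd.ne' (alph_ne_zero h0 hτd) (alph_saddle h0 hτd), hK,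
    norm_alph h0 hτd, alph_sq]
  push_cast
  field_simp
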